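/- Leibniz rule via plane rooted trees: for any (n+1)-tuple f_0,...,f_n of n-times differentiable functions of one variable, the n-th derivative of the product f_0 f_1 ··· f_n at x equals the sum over plane rooted trees T on n+1 vertices and over permutations σ of the n+1 vertices of [ f_{σ(root)}^{(deg(root))}(x) / deg(root)! ] times the product over non-root vertices v of [ f_{σ(v)}^{(deg(v)-1)}(x) / (deg(v)-1)! ]. -/

import Mathlib

/-- A plane rooted tree: a root together with a linearly ordered list of
plane rooted subtrees. -/
inductive PlaneTree : Type
  | node : List PlaneTree → PlaneTree

namespace PlaneTree

mutual
  /-- The list, in depth-first (preorder) traversal order, of the numbers of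
  children of the vertices of a plane rooted tree.  Note that for the root
  `deg(root)` equals its number of children, while for every other vertex
  `deg(v) - 1` equals its number of children. -/
  def childCounts : PlaneTree → List ℕ
    | node ts => ts.length :: childCountsList ts
  /-- Auxiliary: concatenated child-count lists of a forest. -/
  def childCountsList : List PlaneTree → List ℕ
    | [] => []
    | t :: ts => childCounts t ++ childCountsList ts
end

/-- The number of vertices of a plane rooted tree. -/
def size (T : PlaneTree) : ℕ := T.childCounts.length

end PlaneTree

open Finset

/-!
By the multinomial Leibniz rule the left-hand side is
`n! ∑_{m₀ + ⋯ + mₙ = n} ∏ᵢ fᵢ^{(mᵢ)}(x) / mᵢ!`. Listing child counts in preorder is a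
bijection from plane trees on `n + 1` vertices onto Łukasiewicz words: words of length `n + 1`
and sum `n` whose prefix of length `k ≤ n` has sum at least `k`. By the cycle lemma exactly one
of the `n + 1` rotations of a word of length `n + 1` and sum `n` is Łukasiewicz, so for every
`m` exactly `(n + 1)! / (n + 1) = n!` permutations `σ` make `m ∘ σ` Łukasiewicz, and the tree
sum counts each `m` exactly `n!` times.
-/

open scoped Nat

theorem Finset.finAntidiagonal_zero_left (N : ℕ) :
    finAntidiagonal 0 N = if N = 0 then {0} else ∅ := by
  ext m
  split_ifs with h <;> simp [Subsingleton.elim m 0, eq_comm, h]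

theorem Finset.sum_finAntidiagonal_succ {M : Type*} [AddCommMonoid M] (d N : ℕ)
    (g : (Fin (d + 1) → ℕ) → M) :
    ∑ m ∈ finAntidiagonal (d + 1) N, g m =
      ∑ k ∈ range (N + 1), ∑ m ∈ finAntidiagonal d (N - k), g (Fin.cons k m) := by
  rw [finAntidiagonal, finAntidiagonal.aux, sum_disjiUnion,
    Nat.sum_antidiagonal_eq_sum_range_succ_mk]
  simp [finAntidiagonal]

theorem Finset.sum_finAntidiagonal_comp_perm {M : Type*} [AddCommMonoid M] {d : ℕ} (N : ℕ)
    (σ : Equiv.Perm (Fin d)) (g : (Fin d → ℕ) → M) :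
    ∑ m ∈ finAntidiagonal d N, g (m ∘ σ) = ∑ m ∈ finAntidiagonal d N, g m := by
  refine sum_nbij' (· ∘ σ) (· ∘ σ.symm) (fun m hm => ?_) (fun m hm => ?_)
    (fun m _ => by ext; simp) (fun m _ => by ext; simp) (fun _ _ => rfl)
  · simpa [Equiv.sum_comp σ m] using hm
  · simpa [Equiv.sum_comp σ.symm m] using hm

theorem iteratedDeriv_prod_eq_sum_finAntidiagonal {𝕜 : Type*} [NontriviallyNormedField 𝕜]
    [CharZero 𝕜] {d N : ℕ} {f : Fin d → 𝕜 → 𝕜} {x : 𝕜} (hf : ∀ i, ContDiffAt 𝕜 N (f i) x) :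
    iteratedDeriv N (fun t => ∏ i, f i t) x =
      N ! * ∑ m ∈ finAntidiagonal d N, ∏ i, iteratedDeriv (m i) (f i) x / (m i)! := by
  induction d generalizing N with
  | zero =>
    rw [finAntidiagonal_zero_left]
    split_ifs with h <;> simp [iteratedDeriv_const, h]
  | succ d ih =>
    simp only [Fin.prod_univ_succ]
    rw [iteratedDeriv_fun_mul (hf 0) (contDiffAt_prod (t := univ) fun i _ => hf i.succ),
      sum_finAntidiagonal_succ, mul_sum]
    refine Finset.sum_congr rfl fun k hk => ?_
    have hkN : k ≤ N := Nat.lt_succ_iff.1 (mem_range.1 hk)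
    rw [ih fun i => (hf i.succ).of_le (by exact_mod_cast N.sub_le k)]
    simp only [mul_sum]
    refine Finset.sum_congr rfl fun m _ => ?_
    simp only [Fin.cons_zero, Fin.cons_succ]
    rw [← Nat.choose_mul_factorial_mul_factorial hkN]
    have : (k ! : 𝕜) ≠ 0 := Nat.cast_ne_zero.2 k.factorial_ne_zero
    push_cast
    field_simp

theorem List.ofFn_getD_of_length_eq {α : Type*} {n : ℕ} {l : List α} (h : l.length = n) (d : α) :
    List.ofFn (fun i : Fin n => l.getD i d) = l := by
  subst h
  exact List.ext_getElem (by simp) fun i _ _ => by simp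

theorem List.getD_ofFn {α : Type*} {n : ℕ} (g : Fin n → α) (i : Fin n) (d : α) :
    (List.ofFn g).getD i d = g i := by
  simp

theorem List.rotate_ofFn {α : Type*} {n : ℕ} (g : Fin (n + 1) → α) (c : Fin (n + 1)) :
    (List.ofFn g).rotate c = List.ofFn fun i => g (i + c) := by
  refine List.ext_getElem (by simp) fun i _ _ => ?_
  simp only [List.getElem_rotate, List.getElem_ofFn, List.length_ofFn]
  congr 1

theorem List.sum_take_rotate_add {w : List ℕ} {c k : ℕ} (hc : c ≤ w.length)
    (hk : k ≤ w.length) :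
    ((w.rotate c).take k).sum + ((w ++ w).take c).sum = ((w ++ w).take (c + k)).sum := by
  have hrot : (w.rotate c).take k = (w.drop c ++ w).take k := by
    rw [List.rotate_eq_drop_append_take hc, List.take_append, List.take_append, List.take_take,
      List.length_drop, min_eq_left (by omega)]
  rw [hrot, ← List.drop_append_of_le_length hc, add_comm, ← List.sum_append, ← List.take_add]

/-- Cycle lemma for the height function `H`: the unique `c` is the first minimum of `H` on
`[0, n]`. -/
theorem existsUnique_forall_le_apply_add {n : ℕ} {H : ℕ → ℤ}
    (hH : ∀ j ≤ n, H (j + (n + 1)) = H j - 1) :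
    ∃! c : Fin (n + 1), ∀ k ≤ n, H c ≤ H (c + k) := by
  classical
  have hmin : ∃ c, c ≤ n ∧ ∀ j ≤ n, H c ≤ H j := by
    obtain ⟨c, hc, hcmin⟩ := (range (n + 1)).exists_min_image H nonempty_range_add_one
    exact ⟨c, Nat.lt_succ_iff.1 (mem_range.1 hc),
      fun j hj => hcmin j (mem_range.2 (Nat.lt_succ_of_le hj))⟩
  obtain ⟨hcn, hcmin⟩ := Nat.find_spec hmin
  have hfirst : ∀ i < Nat.find hmin, H (Nat.find hmin) < H i := by
    intro i hi
    have := Nat.find_min hmin hi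
    push Not at this
    obtain ⟨j, hj, hji⟩ := this (by omega)
    exact (hcmin j hj).trans_lt hji
  have hgood : ∀ k ≤ n, H (Nat.find hmin) ≤ H (Nat.find hmin + k) := by
    intro k hk
    rcases le_or_gt (Nat.find hmin + k) n with h | h
    · exact hcmin _ h
    · have := hfirst (Nat.find hmin + k - (n + 1)) (by omega)
      rw [show Nat.find hmin + k = Nat.find hmin + k - (n + 1) + (n + 1) by omega,
        hH _ (by omega)]
      omega
  have hunique : ∀ a b : ℕ, a < b → b ≤ n → (∀ k ≤ n, H a ≤ H (a + k)) →
      (∀ k ≤ n, H b ≤ H (b + k)) → False := by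
    intro a b hab hbn ha hb
    have h1 := ha (b - a) (by omega)
    have h2 := hb (a + (n + 1) - b) (by omega)
    rw [Nat.add_sub_cancel' hab.le] at h1
    rw [show b + (a + (n + 1) - b) = a + (n + 1) by omega, hH a (by omega)] at h2
    omega
  refine ⟨⟨Nat.find hmin, by omega⟩, hgood, fun c hc => Fin.ext ?_⟩
  rcases lt_trichotomy c.val (Nat.find hmin) with h | h | h
  · exact (hunique _ _ h hcn hc hgood).elim
  · exact h
  · exact (hunique _ _ h (by omega) hgood hc).elim

namespace PlaneTree

/-- `IsForestWord r l`: `l` is the preorder child-count word of a forest of `r` plane trees;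
for `r = 1`, a Łukasiewicz word. -/
def IsForestWord (r : ℕ) (l : List ℕ) : Prop :=
  l.sum + r = l.length ∧ ∀ k < l.length, k < (l.take k).sum + r

instance (r : ℕ) : DecidablePred (IsForestWord r) := fun _ => by
  unfold IsForestWord; infer_instance

theorem isForestWord_nil {r : ℕ} : IsForestWord r [] ↔ r = 0 := by
  simp [IsForestWord]

theorem isForestWord_cons {r a : ℕ} {l : List ℕ} :
    IsForestWord r (a :: l) ↔ 0 < r ∧ IsForestWord (r - 1 + a) l := by
  simp only [IsForestWord, List.sum_cons, List.length_cons, Nat.forall_lt_succ_left',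
    List.take_zero, List.sum_nil, zero_add, List.take_succ_cons]
  constructor
  · rintro ⟨hsum, hr, hpref⟩
    exact ⟨hr, by omega, fun k hk => by have := hpref k hk; omega⟩
  · rintro ⟨hr, hsum, hpref⟩
    exact ⟨by omega, hr, fun k hk => by have := hpref k hk; omega⟩

mutual
theorem isForestWord_childCounts_append :
    ∀ (T : PlaneTree) (r : ℕ) (l : List ℕ), IsForestWord r l →
      IsForestWord (r + 1) (T.childCounts ++ l)
  | node ts, r, l, h => by
    rw [childCounts, List.cons_append, isForestWord_cons]
    exact ⟨r.succ_pos, by simpa using isForestWord_childCountsList_append ts r l h⟩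
theorem isForestWord_childCountsList_append :
    ∀ (ts : List PlaneTree) (r : ℕ) (l : List ℕ), IsForestWord r l →
      IsForestWord (r + ts.length) (childCountsList ts ++ l)
  | [], r, l, h => by simpa [childCountsList] using h
  | t :: ts, r, l, h => by
    rw [childCountsList, List.append_assoc, List.length_cons, ← add_assoc]
    exact isForestWord_childCounts_append t _ _ (isForestWord_childCountsList_append ts r l h)
end

theorem isForestWord_childCounts (T : PlaneTree) : IsForestWord 1 T.childCounts := by
  simpa using isForestWord_childCounts_append T 0 [] (isForestWord_nil.2 rfl)

mutual
theorem eq_of_childCounts_append_eq :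
    ∀ (T T' : PlaneTree) (l l' : List ℕ), T.childCounts ++ l = T'.childCounts ++ l' →
      T = T' ∧ l = l'
  | node ts, node ts', l, l', h => by
    simp only [childCounts, List.cons_append, List.cons.injEq] at h
    obtain ⟨rfl, rfl⟩ := eq_of_childCountsList_append_eq ts ts' l l' h.1 h.2
    exact ⟨rfl, rfl⟩
theorem eq_of_childCountsList_append_eq :
    ∀ (ts ts' : List PlaneTree) (l l' : List ℕ), ts.length = ts'.length →
      childCountsList ts ++ l = childCountsList ts' ++ l' → ts = ts' ∧ l = l'
  | [], [], l, l', _, h => ⟨rfl, by simpa [childCountsList] using h⟩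
  | t :: ts, t' :: ts', l, l', hlen, h => by
    simp only [childCountsList, List.append_assoc] at h
    obtain ⟨rfl, hrest⟩ := eq_of_childCounts_append_eq t t' _ _ h
    obtain ⟨rfl, rfl⟩ := eq_of_childCountsList_append_eq ts ts' l l' (by simpa using hlen) hrest
    exact ⟨rfl, rfl⟩
end

theorem childCounts_injective : Function.Injective childCounts := fun T T' h =>
  (eq_of_childCounts_append_eq T T' [] [] (by simpa using h)).1

theorem childCountsList_append (ts ts' : List PlaneTree) :
    childCountsList (ts ++ ts') = childCountsList ts ++ childCountsList ts' := by
  induction ts with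
  | nil => simp [childCountsList]
  | cons t ts ih => simp [childCountsList, ih]

/-- The first letter `a` is the root of the first tree; the rest of the word encodes its `a`
subtrees followed by the other `r - 1` trees. -/
theorem exists_childCountsList_eq {r : ℕ} {l : List ℕ} (h : IsForestWord r l) :
    ∃ ts : List PlaneTree, ts.length = r ∧ childCountsList ts = l := by
  induction l generalizing r with
  | nil => exact ⟨[], (isForestWord_nil.1 h).symm, rfl⟩
  | cons a l ih =>
    obtain ⟨hr, hl⟩ := isForestWord_cons.1 h
    obtain ⟨ts, hlen, rfl⟩ := ih hl
    refine ⟨node (ts.take a) :: ts.drop a,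
      by simp only [List.length_cons, List.length_drop]; omega, ?_⟩
    rw [childCountsList, childCounts, List.cons_append, ← childCountsList_append,
      List.take_append_drop, List.length_take, min_eq_left (by omega)]

theorem exists_childCounts_eq {l : List ℕ} (h : IsForestWord 1 l) :
    ∃ T : PlaneTree, T.childCounts = l := by
  obtain ⟨ts, hlen, rfl⟩ := exists_childCountsList_eq h
  obtain ⟨T, rfl⟩ := List.length_eq_one_iff.1 hlen
  exact ⟨T, by simp [childCountsList]⟩

theorem existsUnique_isForestWord_rotate {n : ℕ} {w : List ℕ} (hlen : w.length = n + 1)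
    (hsum : w.sum = n) : ∃! c : Fin (n + 1), IsForestWord 1 (w.rotate c) := by
  set H : ℕ → ℤ := fun j => ((w ++ w).take j).sum - j
  have hH : ∀ j ≤ n, H (j + (n + 1)) = H j - 1 := by
    intro j hj
    have hshift : (w ++ w).take (j + (n + 1)) = w ++ (w ++ w).take j := by
      rw [List.take_append, List.take_of_length_le (by omega), hlen, Nat.add_sub_cancel,
        List.take_append_of_le_length (by omega)]
    simp only [H, hshift, List.sum_append, hsum]
    push_cast
    ring
  have hrot : ∀ c : Fin (n + 1), IsForestWord 1 (w.rotate c) ↔ ∀ k ≤ n, H c ≤ H (c + k) := by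
    intro c
    have hsumrot : (w.rotate c).sum = n := by rw [(List.rotate_perm w c).sum_eq, hsum]
    simp only [IsForestWord, List.length_rotate, hlen, hsumrot, true_and, H]
    refine forall_congr' fun k => ⟨fun h hk => ?_, fun h hk => ?_⟩ <;>
    · have := List.sum_take_rotate_add (w := w) (c := c) (k := k) (by omega) (by omega)
      have := h (by omega)
      omega
  simp only [hrot]
  exact existsUnique_forall_le_apply_add hH

theorem card_filter_isForestWord_comp_perm {n : ℕ} (m : Fin (n + 1) → ℕ) (hm : ∑ i, m i = n) :
    #{σ : Equiv.Perm (Fin (n + 1)) | IsForestWord 1 (List.ofFn (m ∘ σ))} = n ! := by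
  set P : Equiv.Perm (Fin (n + 1)) → Prop := fun σ => IsForestWord 1 (List.ofFn (m ∘ σ))
  have huniq (τ : Equiv.Perm (Fin (n + 1))) : ∃! c : Fin (n + 1), P (τ * Equiv.addRight c) := by
    have hsum : (List.ofFn (m ∘ τ)).sum = n := by
      rw [List.sum_ofFn]
      exact (Equiv.sum_comp τ m).trans hm
    have := existsUnique_isForestWord_rotate (w := List.ofFn (m ∘ τ)) List.length_ofFn hsum
    simp only [List.rotate_ofFn] at this
    exact this
  have hbij : Function.Bijective
      fun p : {σ // P σ} × Fin (n + 1) => p.1.1 * Equiv.addRight p.2 := by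
    constructor
    · rintro ⟨⟨σ, hσ⟩, c⟩ ⟨⟨σ', hσ'⟩, c'⟩ h
      dsimp only at h
      have hσσ' : σ' = σ * Equiv.addRight (-c' + c) := by
        rw [Equiv.addRight_add, ← mul_assoc, h, mul_assoc, ← Equiv.addRight_add]
        simp
      have hc : -c' + c = 0 := (huniq σ).unique (by rwa [← hσσ']) (by simpa using hσ)
      obtain rfl : c = c' := by rwa [neg_add_eq_zero, eq_comm] at hc
      obtain rfl : σ = σ' := mul_right_cancel h
      rfl
    · intro τ
      obtain ⟨c, hc, -⟩ := huniq τ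
      exact ⟨(⟨_, hc⟩, -c), by simp [mul_assoc, ← Equiv.addRight_add]⟩
  have hcard := Fintype.card_of_bijective hbij
  rw [Fintype.card_prod, Fintype.card_subtype, Fintype.card_fin, Fintype.card_perm,
    Fintype.card_fin, Nat.factorial_succ, mul_comm] at hcard
  exact Nat.eq_of_mul_eq_mul_left n.succ_pos hcard

def lukasiewiczWords (n : ℕ) : Finset (Fin (n + 1) → ℕ) :=
  {w ∈ finAntidiagonal (n + 1) n | IsForestWord 1 (List.ofFn w)}

theorem finsum_size_eq_sum_lukasiewiczWords {M : Type*} [AddCommMonoid M] (n : ℕ)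
    (F : (Fin (n + 1) → ℕ) → M) :
    ∑ᶠ T : {T : PlaneTree // T.size = n + 1}, F (fun i => T.1.childCounts.getD i 0) =
      ∑ w ∈ lukasiewiczWords n, F w := by
  have hword (T : {T : PlaneTree // T.size = n + 1}) :
      List.ofFn (fun i : Fin (n + 1) => T.1.childCounts.getD i 0) = T.1.childCounts :=
    List.ofFn_getD_of_length_eq T.2 0
  have hmem (T : {T : PlaneTree // T.size = n + 1}) :
      (fun i : Fin (n + 1) => T.1.childCounts.getD i 0) ∈ lukasiewiczWords n := by
    have hT := isForestWord_childCounts T.1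
    rw [lukasiewiczWords, mem_filter, mem_finAntidiagonal, ← List.sum_ofFn, hword]
    exact ⟨by have := hT.1; have := T.2; simp only [size] at *; omega, hT⟩
  have hbij : Function.Bijective
      fun T : {T : PlaneTree // T.size = n + 1} => (⟨_, hmem T⟩ : lukasiewiczWords n) := by
    constructor
    · intro T T' h
      have h' := congrArg (List.ofFn ∘ Subtype.val) h
      simp only [Function.comp_apply, hword] at h'
      exact Subtype.ext (childCounts_injective h')
    · rintro ⟨w, hw⟩
      obtain ⟨T, hT⟩ := exists_childCounts_eq (mem_filter.1 hw).2
      refine ⟨⟨T, by simp [size, hT]⟩, Subtype.ext (funext fun i => ?_)⟩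
      exact (congrArg (List.getD · i 0) hT).trans (List.getD_ofFn w i 0)
  rw [← sum_coe_sort, ← finsum_eq_sum_of_fintype,
    ← finsum_comp_equiv (Equiv.ofBijective _ hbij)]
  rfl

theorem sum_lukasiewiczWords_sum_perm {R : Type*} [CommSemiring R] (n : ℕ)
    (g : Fin (n + 1) → ℕ → R) :
    ∑ w ∈ lukasiewiczWords n, ∑ σ : Equiv.Perm (Fin (n + 1)), ∏ i, g (σ i) (w i) =
      n ! • ∑ m ∈ finAntidiagonal (n + 1) n, ∏ j, g j (m j) := by
  set G : (Fin (n + 1) → ℕ) → R := fun m => ∏ j, g j (m j)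
  set P : (Fin (n + 1) → ℕ) → Prop := fun w => IsForestWord 1 (List.ofFn w)
  have hprod (w : Fin (n + 1) → ℕ) (σ : Equiv.Perm (Fin (n + 1))) :
      ∏ i, g (σ i) (w i) = G (w ∘ σ.symm) := by
    simp only [G, Function.comp_apply, ← Equiv.prod_comp σ fun j => g j (w (σ.symm j)),
      Equiv.symm_apply_apply]
  calc ∑ w ∈ lukasiewiczWords n, ∑ σ : Equiv.Perm (Fin (n + 1)), ∏ i, g (σ i) (w i)
      = ∑ σ : Equiv.Perm (Fin (n + 1)), ∑ w ∈ finAntidiagonal (n + 1) n,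
          if P w then G (w ∘ σ.symm) else 0 := by
        rw [sum_comm]
        simp only [lukasiewiczWords, sum_filter, hprod, P]
    _ = ∑ σ : Equiv.Perm (Fin (n + 1)), ∑ m ∈ finAntidiagonal (n + 1) n,
          if P (m ∘ σ) then G m else 0 := by
        refine Finset.sum_congr rfl fun σ _ => ?_
        rw [← sum_finAntidiagonal_comp_perm n σ.symm fun m => if P (m ∘ σ) then G m else 0]
        simp [Function.comp_assoc]
    _ = ∑ m ∈ finAntidiagonal (n + 1) n, #{σ : Equiv.Perm (Fin (n + 1)) | P (m ∘ σ)} • G m := by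
        rw [sum_comm]
        simp only [← sum_filter, sum_const]
    _ = n ! • ∑ m ∈ finAntidiagonal (n + 1) n, G m := by
        rw [smul_sum]
        refine Finset.sum_congr rfl fun m hm => ?_
        rw [card_filter_isForestWord_comp_perm m (mem_finAntidiagonal.1 hm)]

end PlaneTree

/- Vertices of `T` are identified with their positions `0, …, n` in preorder, the root being
`0`; a vertex's number of children is `deg(root)` at the root and `deg(v) - 1` elsewhere. -/
theorem leibniz_via_plane_trees (n : ℕ) (f : Fin (n + 1) → ℝ → ℝ)
    (hf : ∀ i, ContDiff ℝ n (f i)) (x : ℝ) :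
    iteratedDeriv n (fun t => ∏ i, f i t) x =
      ∑ᶠ T : {T : PlaneTree // T.size = n + 1},
        ∑ σ : Equiv.Perm (Fin (n + 1)),
          ∏ i : Fin (n + 1),
            iteratedDeriv (T.1.childCounts.getD (i : ℕ) 0) (f (σ i)) x /
              (T.1.childCounts.getD (i : ℕ) 0).factorial := by
  rw [iteratedDeriv_prod_eq_sum_finAntidiagonal fun i => (hf i).contDiffAt,
    PlaneTree.finsum_size_eq_sum_lukasiewiczWords n
      fun w => ∑ σ : Equiv.Perm (Fin (n + 1)), ∏ i, iteratedDeriv (w i) (f (σ i)) x / (w i)!,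
    PlaneTree.sum_lukasiewiczWords_sum_perm n fun j k => iteratedDeriv k (f j) x / k !,
    nsmul_eq_mul]
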